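/- arXiv:1302.3365 — 4 statements merged into one kernel-verified Lean document; each statement's English description precedes it below -/
import Mathlib

section
/- For finite sets of finite sets v and v' over a finite base set A, v ⪰ v' holds (where v ⪰ v' iff ζ(v) = ζ(v ∪ v'), with ζ removing from a collection all sets that strictly contain another set of the collection and all sets of cardinality greater than N) if and only if every element e' ∈ v' with |e'| ≤ N has some e ∈ v with e ⊆ e'. -/
/-- The simplification operator `ζ`: keep only the sets of cardinality at most `N`
that do not strictly contain another set of the collection. -/
def zeta {α : Type*} [DecidableEq α] (N : ℕ) (v : Finset (Finset α)) : Finset (Finset α) :=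
  v.filter (fun e => e.card ≤ N ∧ ¬ ∃ e' ∈ v, e' ≠ e ∧ e' ⊂ e)

/-- The relation `v ⪰ v'` : `ζ(v) = ζ(v ∪ v')`. -/
def succeq {α : Type*} [DecidableEq α] (N : ℕ) (v v' : Finset (Finset α)) : Prop :=
  zeta N v = zeta N (v ∪ v')

theorem succeq_iff_covers {α : Type*} [DecidableEq α] [Fintype α] (N : ℕ)
    (v v' : Finset (Finset α))
    (hvN : ∀ e ∈ v, e.card ≤ N) (hv'N : ∀ e ∈ v', e.card ≤ N)
    (hv : zeta N v = v) (hv' : zeta N v' = v') :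
    succeq N v v' ↔ ∀ e' ∈ v', e'.card ≤ N → ∃ e ∈ v, e ⊆ e' := by
  constructor
  · intro h e' he' _
    by_contra hc
    push_neg at hc
    have hne : ((v ∪ v').filter (· ⊆ e')).Nonempty :=
      ⟨e', Finset.mem_filter.2 ⟨Finset.mem_union_right _ he', subset_rfl⟩⟩
    obtain ⟨m, hm, hmin⟩ := Finset.exists_min_image _ (fun s => s.card) hne
    rw [Finset.mem_filter] at hm
    have hmz : m ∈ zeta N (v ∪ v') := by
      refine Finset.mem_filter.2 ⟨hm.1, ?_, ?_⟩
      · exact le_trans (Finset.card_le_card hm.2) (hv'N e' he')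
      · rintro ⟨e'', he'', hne', hss⟩
        have := hmin e'' (Finset.mem_filter.2 ⟨he'', hss.subset.trans hm.2⟩)
        exact absurd (Finset.card_lt_card hss) (not_lt.2 this)
    rw [← h] at hmz
    exact hc m (Finset.mem_of_mem_filter _ hmz) hm.2
  · intro h
    unfold succeq zeta
    ext e
    simp only [Finset.mem_filter, Finset.mem_union]
    constructor
    · rintro ⟨hev, hcard, hns⟩
      refine ⟨Or.inl hev, hcard, ?_⟩
      rintro ⟨e'', he'', hne', hss⟩
      rcases he'' with h1 | h1
      · exact hns ⟨e'', h1, hne', hss⟩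
      · obtain ⟨e₀, he₀, hsub⟩ := h e'' h1 (hv'N _ h1)
        have hss' : e₀ ⊂ e := lt_of_le_of_lt hsub hss
        exact hns ⟨e₀, he₀, hss'.ne, hss'⟩
    · rintro ⟨heuv, hcard, hns⟩
      have hev : e ∈ v := by
        rcases heuv with h1 | h1
        · exact h1
        · obtain ⟨e₀, he₀, hsub⟩ := h e h1 hcard
          rcases eq_or_ne e₀ e with rfl | hne
          · exact he₀
          · exact absurd ⟨e₀, Or.inl he₀, hne, hsub.ssubset_of_ne hne⟩ hns
      refine ⟨hev, hcard, ?_⟩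
      rintro ⟨e'', he'', hne', hss⟩
      exact hns ⟨e'', Or.inl he'', hne', hss⟩
end

section
/- The relation ⪰ is transitive on collections of subsets of A that are fixed points of ζ: if ζ(v1)=v1, ζ(v2)=v2, ζ(v3)=v3, v1 ⪰ v2 and v2 ⪰ v3, then v1 ⪰ v3. -/
lemma mem_zeta {α : Type*} [DecidableEq α] (N : ℕ) (v : Finset (Finset α)) (e : Finset α) :
    e ∈ zeta N v ↔ e ∈ v ∧ e.card ≤ N ∧ ∀ e' ∈ v, ¬ e' ⊂ e := by
  simp only [zeta, Finset.mem_filter]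
  constructor
  · rintro ⟨hv, hN, hne⟩
    exact ⟨hv, hN, fun e' he' hss => hne ⟨e', he', hss.ne, hss⟩⟩
  · rintro ⟨hv, hN, h⟩
    exact ⟨hv, hN, fun ⟨e', he', _, hss⟩ => h e' he' hss⟩

theorem succeq_trans {α : Type*} [DecidableEq α] [Fintype α] (N : ℕ)
    (v1 v2 v3 : Finset (Finset α))
    (h1 : zeta N v1 = v1) (h2 : zeta N v2 = v2) (h3 : zeta N v3 = v3)
    (h12 : succeq N v1 v2) (h23 : succeq N v2 v3) :
    succeq N v1 v3 := by
  unfold succeq at *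
  have e12 : zeta N (v1 ∪ v2) = v1 := h12 ▸ h1
  have e23 : zeta N (v2 ∪ v3) = v2 := h23 ▸ h2
  -- facts about v1 elements
  have F1 : ∀ e ∈ v1, e.card ≤ N ∧ ∀ e' ∈ v1 ∪ v2, ¬ e' ⊂ e := by
    intro e he
    have := (mem_zeta N (v1 ∪ v2) e).mp (by rw [e12]; exact he)
    exact ⟨this.2.1, this.2.2⟩
  have F2 : ∀ e ∈ v2, e.card ≤ N ∧ ∀ e' ∈ v2 ∪ v3, ¬ e' ⊂ e := by
    intro e he
    have := (mem_zeta N (v2 ∪ v3) e).mp (by rw [e23]; exact he)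
    exact ⟨this.2.1, this.2.2⟩
  have F3 : ∀ e ∈ v3, e.card ≤ N ∧ ∀ e' ∈ v3, ¬ e' ⊂ e := by
    intro e he
    have := (mem_zeta N v3 e).mp (by rw [h3]; exact he)
    exact ⟨this.2.1, this.2.2⟩
  -- e ∈ v2, e ∉ v1 → strict subset in v1
  have C2 : ∀ e ∈ v2, e ∉ v1 → ∃ e' ∈ v1, e' ⊂ e := by
    intro e he hne
    have hmem : e ∈ v1 ∪ v2 := Finset.mem_union_right _ he
    have hnz : e ∉ zeta N (v1 ∪ v2) := by rw [e12]; exact hne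
    rw [mem_zeta] at hnz
    push_neg at hnz
    obtain ⟨e', he', hss⟩ := hnz hmem (F2 e he).1
    rcases Finset.mem_union.mp he' with h' | h'
    · exact ⟨e', h', hss⟩
    · exact absurd hss ((F2 e he).2 e' (Finset.mem_union_left _ h'))
  -- e ∈ v3, e ∉ v2 → strict subset in v2
  have C3 : ∀ e ∈ v3, e ∉ v2 → ∃ e' ∈ v2, e' ⊂ e := by
    intro e he hne
    have hmem : e ∈ v2 ∪ v3 := Finset.mem_union_right _ he
    have hnz : e ∉ zeta N (v2 ∪ v3) := by rw [e23]; exact hne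
    rw [mem_zeta] at hnz
    push_neg at hnz
    obtain ⟨e', he', hss⟩ := hnz hmem (F3 e he).1
    rcases Finset.mem_union.mp he' with h' | h'
    · exact ⟨e', h', hss⟩
    · exact absurd hss ((F3 e he).2 e' h')
  -- combined: e ∈ v3, e ∉ v1 → strict subset in v1
  have C13 : ∀ e ∈ v3, e ∉ v1 → ∃ e' ∈ v1, e' ⊂ e := by
    intro e he hne
    by_cases hv2 : e ∈ v2
    · exact C2 e hv2 hne
    · obtain ⟨e', he', hss⟩ := C3 e he hv2
      by_cases hv1 : e' ∈ v1
      · exact ⟨e', hv1, hss⟩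
      · obtain ⟨e'', he'', hss'⟩ := C2 e' he' hv1
        exact ⟨e'', he'', hss'.trans hss⟩
  rw [h1]
  ext e
  rw [mem_zeta]
  constructor
  · intro he
    refine ⟨Finset.mem_union_left _ he, (F1 e he).1, ?_⟩
    intro e' he' hss
    rcases Finset.mem_union.mp he' with h' | h'
    · exact (F1 e he).2 e' (Finset.mem_union_left _ h') hss
    · by_cases hv2 : e' ∈ v2
      · exact (F1 e he).2 e' (Finset.mem_union_right _ hv2) hss
      · obtain ⟨e'', he'', hss'⟩ := C3 e' h' hv2
        exact (F1 e he).2 e'' (Finset.mem_union_right _ he'') (hss'.trans hss)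
  · rintro ⟨hmem, _, hno⟩
    rcases Finset.mem_union.mp hmem with h' | h'
    · exact h'
    · by_contra hne
      obtain ⟨e', he', hss⟩ := C13 e h' hne
      exact hno e' (Finset.mem_union_left _ he') hss
end

section
/- The sets-of-sets product is monotone with respect to ⪰: if v1 ⪰ v1' and v2 ⪰ v2' (all four collections being fixed points of ζ), then v1 ×̃ v2 ⪰ v1' ×̃ v2', where v ×̃ w := { e ∪ e' | e ∈ v, e' ∈ w }. -/
/-- Sets-of-sets product on finite collections: `v ×̃ w = { e ∪ e' | e ∈ v, e' ∈ w }`. -/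
def fprod {α : Type*} [DecidableEq α] (v w : Finset (Finset α)) : Finset (Finset α) :=
  (v ×ˢ w).image fun p => p.1 ∪ p.2

lemma zeta_fixed_mem {α : Type*} [DecidableEq α] {N : ℕ} {v : Finset (Finset α)}
    (h : zeta N v = v) {e : Finset α} (he : e ∈ v) :
    e.card ≤ N ∧ ¬ ∃ e' ∈ v, e' ≠ e ∧ e' ⊂ e := by
  rw [← h] at he
  exact (Finset.mem_filter.mp he).2

lemma dominates_succeq {α : Type*} [DecidableEq α] (N : ℕ) {v w : Finset (Finset α)}
    (hd : ∀ f' ∈ w, ∃ f ∈ v, f ⊆ f') : succeq N v w := by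
  unfold succeq zeta
  ext f
  simp only [Finset.mem_filter, Finset.mem_union]
  constructor
  · rintro ⟨hf, hN, hmin⟩
    refine ⟨Or.inl hf, hN, ?_⟩
    rintro ⟨g, hg | hg, hne, hss⟩
    · exact hmin ⟨g, hg, hne, hss⟩
    · obtain ⟨h, hh, hsub⟩ := hd g hg
      have hss' : h ⊂ f := Finset.ssubset_of_subset_of_ssubset hsub hss
      exact hmin ⟨h, hh, hss'.ne, hss'⟩
  · rintro ⟨hf | hf, hN, hmin⟩
    · exact ⟨hf, hN, fun ⟨g, hg, hne, hss⟩ => hmin ⟨g, Or.inl hg, hne, hss⟩⟩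
    · obtain ⟨h, hh, hsub⟩ := hd f hf
      rcases eq_or_ne h f with rfl | hne
      · exact ⟨hh, hN, fun ⟨g, hg, hne, hss⟩ => hmin ⟨g, Or.inl hg, hne, hss⟩⟩
      · exact absurd ⟨h, Or.inl hh, hne, Finset.ssubset_iff_subset_ne.mpr ⟨hsub, hne⟩⟩ hmin

lemma succeq_dominates {α : Type*} [DecidableEq α] {N : ℕ} {v w : Finset (Finset α)}
    (hv : zeta N v = v) (hw : zeta N w = w) (h : succeq N v w) :
    ∀ f' ∈ w, ∃ f ∈ v, f ⊆ f' := by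
  intro e' he'
  by_cases hev : e' ∈ v
  · exact ⟨e', hev, subset_rfl⟩
  have hN := (zeta_fixed_mem hw he').1
  have hwmin := (zeta_fixed_mem hw he').2
  have hnz : e' ∉ zeta N (v ∪ w) := by rw [← h, hv]; exact hev
  unfold zeta at hnz
  simp only [Finset.mem_filter, Finset.mem_union, not_and, not_not] at hnz
  obtain ⟨g, hg, hne, hss⟩ := hnz (Or.inr he') hN
  rcases hg with hg | hg
  · exact ⟨g, hg, hss.subset⟩
  · exact absurd ⟨g, hg, hne, hss⟩ hwmin

theorem succeq_fprod_mono {α : Type*} [DecidableEq α] [Fintype α] (N : ℕ)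
    (v1 v1' v2 v2' : Finset (Finset α))
    (h1 : zeta N v1 = v1) (h1' : zeta N v1' = v1')
    (h2 : zeta N v2 = v2) (h2' : zeta N v2' = v2')
    (hv1 : succeq N v1 v1') (hv2 : succeq N v2 v2') :
    succeq N (fprod v1 v2) (fprod v1' v2') := by
  apply dominates_succeq
  intro f' hf'
  simp only [fprod, Finset.mem_image, Finset.mem_product] at hf'
  obtain ⟨⟨a, b⟩, ⟨ha, hb⟩, rfl⟩ := hf'
  obtain ⟨a0, ha0, hsa⟩ := succeq_dominates h1 h1' hv1 a ha
  obtain ⟨b0, hb0, hsb⟩ := succeq_dominates h2 h2' hv2 b hb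
  exact ⟨a0 ∪ b0,
    Finset.mem_image.mpr ⟨(a0, b0), Finset.mem_product.mpr ⟨ha0, hb0⟩, rfl⟩,
    Finset.union_subset_union hsa hsb⟩
end

section
/- For an acyclic local path a_{i} →ℓ1 … →ℓm a_{j} in automaton a, disabling one external local state b_k ∈ ext_a(ℓ) for each label ℓ of the path with ext_a(ℓ) ≠ ∅ makes every label of that path with nonempty external requirement unavailable; consequently, if every acyclic local path in automaton a from i to j contains at least one label whose external local states are all disabled, then a_j is unreachable from any state with s(a)=i in the disabled system. -/
/-- An automata network `(Σ, S, ℒ, T)`: a set of labels and, for each automaton `a`,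
a set of local transitions `i —ℓ→ j`. Local states of automaton `a` have type `St a`;
global states are elements of `∀ a, St a`; the set of all local states is `Σ a, St a`. -/
structure ANet (ι L : Type*) (St : ι → Type*) where
  labels : Set L
  trans : ∀ a : ι, Set (St a × L × St a)

variable {ι L : Type*} {St : ι → Type*}

/-- `•ℓ`: the set of local states that are sources of an `ℓ`-labelled transition. -/
def precond (Sys : ANet ι L St) (ℓ : L) : Set (Σ a : ι, St a) :=
  { p | ∃ j, (p.2, ℓ, j) ∈ Sys.trans p.1 }

/-- `Sys ⊖ ls`: disabling the local states `ls` removes every label `ℓ` with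
`ls ∩ •ℓ ≠ ∅`, together with all its transitions. -/
def disable (Sys : ANet ι L St) (ls : Set (Σ a : ι, St a)) : ANet ι L St where
  labels := { ℓ ∈ Sys.labels | precond Sys ℓ ∩ ls = ∅ }
  trans := fun a =>
    { t ∈ Sys.trans a | t.2.1 ∈ Sys.labels ∧ precond Sys t.2.1 ∩ ls = ∅ }

/-- Global transition relation: `s → s'` via some label `ℓ` when every automaton having
an `ℓ`-transition moves from its source to its target, and all other automata are
unchanged. -/
def stepRel (Sys : ANet ι L St) (s s' : ∀ a, St a) : Prop :=
  ∃ ℓ ∈ Sys.labels,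
    (∀ a : ι, ∀ i j : St a, (i, ℓ, j) ∈ Sys.trans a → s a = i ∧ s' a = j) ∧
    (∀ b : ι, (∀ i j : St b, (i, ℓ, j) ∉ Sys.trans b) → s b = s' b)

/-- Local state `a_j` is reachable from global state `s` if a finite sequence of global
transitions leads to a state where automaton `a` is in local state `j`. -/
def reachable (Sys : ANet ι L St) (s : ∀ a, St a) (a : ι) (j : St a) : Prop :=
  ∃ s', Relation.ReflTransGen (stepRel Sys) s s' ∧ s' a = j

/-- `ext_a(ℓ)`: the local states of automata other than `a` required by label `ℓ`. -/
def extA (Sys : ANet ι L St) (a : ι) (ℓ : L) : Set (Σ b : ι, St b) :=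
  { p | p.1 ≠ a ∧ ∃ k, (p.2, ℓ, k) ∈ Sys.trans p.1 }

section WalkAux

variable {α β : Type*}

/-- A labelled walk: from `x`, each element `(ℓ, y)` is a step `R x ℓ y`. -/
def AWalk (R : α → β → α → Prop) : α → List (β × α) → Prop
  | _, [] => True
  | x, (ℓ, y) :: rest => R x ℓ y ∧ AWalk R y rest

/-- Endpoint of a walk starting at `x`. -/
def ADest (x : α) : List (β × α) → α
  | [] => x
  | (_, y) :: rest => ADest y rest

theorem awalk_snoc {R : α → β → α → Prop} :
    ∀ (w : List (β × α)) (x : α) (ℓ : β) (y : α), AWalk R x w → R (ADest x w) ℓ y →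
      AWalk R x (w ++ [(ℓ, y)]) ∧ ADest x (w ++ [(ℓ, y)]) = y := by
  intro w
  induction w with
  | nil => intro x ℓ y _ h; exact ⟨⟨h, trivial⟩, rfl⟩
  | cons hd tl ih =>
      rintro x ℓ y ⟨h1, h2⟩ h3
      obtain ⟨ha, hb⟩ := ih hd.2 ℓ y h2 h3
      exact ⟨⟨h1, ha⟩, hb⟩

theorem awalk_suffix {R : α → β → α → Prop} :
    ∀ (w : List (β × α)) (x x' : α), AWalk R x w → x' ∈ x :: w.map Prod.snd →
      ∃ w', AWalk R x' w' ∧ ADest x' w' = ADest x w ∧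
        (x' :: w'.map Prod.snd) <:+ (x :: w.map Prod.snd) := by
  intro w
  induction w with
  | nil =>
      intro x x' _ hmem
      simp only [List.map_nil, List.mem_singleton] at hmem
      subst hmem
      exact ⟨[], trivial, rfl, List.suffix_refl _⟩
  | cons hd tl ih =>
      rintro x x' ⟨h1, h2⟩ hmem
      rcases List.mem_cons.mp hmem with h | h
      · subst h; exact ⟨hd :: tl, ⟨h1, h2⟩, rfl, List.suffix_refl _⟩
      · obtain ⟨w', hw1, hw2, hw3⟩ := ih hd.2 x' h2 (by simpa using h)
        exact ⟨w', hw1, hw2, hw3.trans (List.suffix_cons _ _)⟩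

theorem awalk_nodup {R : α → β → α → Prop} :
    ∀ (n : ℕ) (w : List (β × α)) (x : α), w.length ≤ n → AWalk R x w →
      ∃ w', AWalk R x w' ∧ ADest x w' = ADest x w ∧ (x :: w'.map Prod.snd).Nodup := by
  intro n
  induction n with
  | zero =>
      intro w x hlen _
      have : w = [] := List.eq_nil_of_length_eq_zero (Nat.le_zero.mp hlen)
      subst this
      exact ⟨[], trivial, rfl, by simp⟩
  | succ m ih =>
      intro w x hlen hw
      match w, hw with
      | [], _ => exact ⟨[], trivial, rfl, by simp⟩
      | (ℓ, y) :: rest, ⟨h1, h2⟩ =>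
          have hlen' : rest.length ≤ m := by simpa using Nat.succ_le_succ_iff.mp hlen
          obtain ⟨rest', hr1, hr2, hr3⟩ := ih rest y hlen' h2
          by_cases hx : x ∈ y :: rest'.map Prod.snd
          · obtain ⟨w'', hs1, hs2, hs3⟩ := awalk_suffix rest' y x hr1 hx
            refine ⟨w'', hs1, ?_, hr3.sublist hs3.sublist⟩
            rw [hs2, hr2]; rfl
          · refine ⟨(ℓ, y) :: rest', ⟨h1, hr1⟩, ?_, ?_⟩
            · show ADest y rest' = ADest y rest; exact hr2
            · exact List.nodup_cons.mpr ⟨hx, hr3⟩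

theorem adest_get :
    ∀ (w : List (β × α)) (x : α),
      (x :: w.map Prod.snd).get ⟨w.length, by simp⟩ = ADest x w := by
  intro w
  induction w with
  | nil => intro x; rfl
  | cons hd tl ih => intro x; exact ih hd.2

theorem awalk_get {R : α → β → α → Prop} :
    ∀ (w : List (β × α)) (x : α), AWalk R x w → ∀ (k : ℕ) (h : k < w.length),
      R ((x :: w.map Prod.snd).get ⟨k, by simp; omega⟩)
        (w.get ⟨k, h⟩).1
        ((x :: w.map Prod.snd).get ⟨k + 1, by simp; omega⟩) := by
  intro w
  induction w with
  | nil => intro x _ k h; simp at h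
  | cons hd tl ih =>
      rintro x ⟨h1, h2⟩ k h
      cases k with
      | zero => exact h1
      | succ m =>
          have hm : m < tl.length := by simpa using Nat.succ_lt_succ_iff.mp h
          exact ih hd.2 h2 m hm

end WalkAux


theorem cut_acyclic_paths (Sys : ANet ι L St) (a : ι) (i j : St a)
    (ls : Set (Σ b : ι, St b)) :
    -- every label with a nonempty external requirement intersecting `ls` becomes
    -- unavailable in the disabled system
    ((∀ ℓ : L, (extA Sys a ℓ).Nonempty → (extA Sys a ℓ ∩ ls).Nonempty →
        ℓ ∉ (disable Sys ls).labels)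
    ∧
    -- consequently, if every acyclic local path in `a` from `i` to `j` contains a label
    -- whose (nonempty) external local states are all disabled, then `a_j` is unreachable
    -- from any state with `s a = i` in the disabled system
    ((∀ (n : ℕ) (p : Fin (n + 1) → St a) (lab : Fin n → L),
        (∀ k : Fin n, (p k.castSucc, lab k, p k.succ) ∈ Sys.trans a) →
        p 0 = i → p (Fin.last n) = j → Function.Injective p →
        ∃ k : Fin n, extA Sys a (lab k) ≠ ∅ ∧ extA Sys a (lab k) ⊆ ls) →
      ∀ s : ∀ b, St b, s a = i → ¬ reachable (disable Sys ls) s a j)) := by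
  constructor
  · rintro ℓ _ ⟨q, hq1, hq2⟩ ⟨_, hdis⟩
    have hpre : q ∈ precond Sys ℓ := hq1.2
    exact Set.eq_empty_iff_forall_notMem.mp hdis q ⟨hpre, hq2⟩
  · rintro hyp s hsi ⟨s', hsteps, hja⟩
    set D := disable Sys ls with hD
    set R : St a → L → St a → Prop := fun x ℓ y => (x, ℓ, y) ∈ D.trans a with hR
    -- project the global trace onto automaton a
    have hwalk : ∃ w, AWalk R (s a) w ∧ ADest (s a) w = s' a := by
      clear hja hsi
      induction hsteps with
      | refl => exact ⟨[], trivial, rfl⟩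
      | tail _ hstep ih =>
          rename_i t u _
          obtain ⟨w, hw1, hw2⟩ := ih
          obtain ⟨ℓ, _, hmv, hfix⟩ := hstep
          by_cases hex : ∃ i' j', (i', ℓ, j') ∈ D.trans a
          · obtain ⟨i', j', ht⟩ := hex
            obtain ⟨hti, huj⟩ := hmv a i' j' ht
            have hr : R (t a) ℓ (u a) := by rw [hR]; simp only; rw [hti, huj]; exact ht
            rw [← hw2] at hr
            obtain ⟨ha, hb⟩ := awalk_snoc w (s a) ℓ (u a) hw1 hr
            exact ⟨w ++ [(ℓ, u a)], ha, hb⟩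
          · push_neg at hex
            have : t a = u a := hfix a hex
            exact ⟨w, hw1, hw2.trans this⟩
    obtain ⟨w₀, hw₀, hd₀⟩ := hwalk
    obtain ⟨w, hw, hd, hnd⟩ := awalk_nodup w₀.length w₀ (s a) le_rfl hw₀
    rw [hd₀] at hd
    -- build the Fin-indexed acyclic path
    set x := s a with hx
    set vs := x :: w.map Prod.snd with hvs
    have hlen : vs.length = w.length + 1 := by simp [hvs]
    set n := w.length with hn
    set p : Fin (n + 1) → St a := fun k => vs.get ⟨k.1, by rw [hlen]; exact k.2⟩ with hp
    set lab : Fin n → L := fun k => (w.get ⟨k.1, k.2⟩).1 with hlab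
    have htrans : ∀ k : Fin n, R (p k.castSucc) (lab k) (p k.succ) := by
      intro k
      have := awalk_get w x hw k.1 k.2
      exact this
    have hp0 : p 0 = i := by rw [hp]; simp only; rw [← hsi]; rfl
    have hpl : p (Fin.last n) = j := by
      have h1 : vs.get ⟨n, by omega⟩ = ADest x w := adest_get w x
      exact h1.trans (hd.trans hja)
    have hinj : Function.Injective p := by
      have h := List.nodup_iff_injective_get.mp hnd
      intro k₁ k₂ hk
      have h4 := h hk
      have h5 := congrArg Fin.val h4
      exact Fin.ext h5
    have htransSys : ∀ k : Fin n, (p k.castSucc, lab k, p k.succ) ∈ Sys.trans a :=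
      fun k => (htrans k).1
    obtain ⟨k, hne, hsub⟩ := hyp n p lab htransSys hp0 hpl hinj
    obtain ⟨q, hq⟩ := Set.nonempty_iff_ne_empty.mpr hne
    have hdis : precond Sys (lab k) ∩ ls = ∅ := (htrans k).2.2
    exact Set.eq_empty_iff_forall_notMem.mp hdis q ⟨hq.2, hsub hq⟩
end
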